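/- Let S = ⟨n₁, …, n_k⟩ with n₁ < ⋯ < n_k. For all n ∈ S with n > n_{k−1}n_k (and n + n_k, n + n₁ ∈ S respectively), one has ℓ(n + n_k) = ℓ(n) + 1 and L(n + n₁) = L(n) + 1. -/

import Mathlib

/-- The set of factorization lengths of `n` over the generators `gens`. -/
def lenSet (k : ℕ) (gens : Fin k → ℕ) (n : ℕ) : Set ℕ :=
  {l | ∃ x : Fin k → ℕ, n = ∑ i, x i * gens i ∧ l = ∑ i, x i}

/-!
Among the `m + 1` prefix sums of the first `m` parts of a factorization, two agree modulo `m`,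
so some nonempty block of parts sums to `q * m`. When `m` is a generator, that block can be
replaced by `q` copies of it; if every part of the block is smaller than `m` this shortens the
factorization, if every part is larger it lengthens it.

A factorization of `n + n_k` avoiding `n_k` has all parts at most `n_{k-1}`, hence more than
`n_k` parts because `n > n_{k-1} n_k`, so it is not of minimal length. Therefore a minimal one
contains `n_k`, and removing it gives `ℓ(n + n_k) - 1 ≥ ℓ(n)`. Dually, a factorization of
`n + n₁` avoiding `n₁` has more than `n₁` parts, all larger than `n₁`, so it is not of maximal
length.
-/

open Multiset

namespace Multiset

variable {ι : Type*}

theorem exists_le_dvd_sum_map_of_le_card (f : ι → ℕ) {m : ℕ} (hm : 0 < m)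
    (s : Multiset ι) (hs : m ≤ card s) :
    ∃ t ≤ s, 0 < card t ∧ m ∣ (t.map f).sum := by
  obtain ⟨L, rfl⟩ : ∃ L : List ι, (L : Multiset ι) = s := Quotient.exists_rep s
  replace hs : m ≤ L.length := hs
  set P : ℕ → ℕ := fun i => ((L.take i).map f).sum
  obtain ⟨u, v, huv, hvm, hPuv⟩ : ∃ u v, u < v ∧ v ≤ m ∧ P u % m = P v % m := by
    obtain ⟨u, hu, v, hv, hne, hP⟩ := Finset.exists_ne_map_eq_of_card_lt_of_maps_to
      (s := Finset.range (m + 1)) (t := Finset.range m) (f := fun i => P i % m)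
      (by simp) (fun i _ => by simpa using Nat.mod_lt _ hm)
    simp only [Finset.mem_range] at hu hv
    rcases hne.lt_or_gt with h | h
    exacts [⟨u, v, h, by omega, hP⟩, ⟨v, u, h, by omega, hP.symm⟩]
  have hsplit : P v = P u + (((L.take v).drop u).map f).sum := by
    simp only [P]
    conv_lhs => rw [← List.take_append_drop u (L.take v), List.take_take,
      min_eq_left huv.le, List.map_append, List.sum_append]
  have hcard : card (((L.take v).drop u : List ι) : Multiset ι) = v - u := by
    simp only [coe_card, List.length_drop, List.length_take]
    omega
  refine ⟨((L.take v).drop u : List ι), ?_, by omega, ?_⟩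
  · exact coe_le.mpr ((List.drop_sublist _ _).trans (List.take_sublist _ _)).subperm
  · simpa [hsplit] using (Nat.modEq_iff_dvd' (show P u ≤ P v by omega)).mp hPuv

theorem lt_card_of_mul_lt_sum_map (f : ι → ℕ) {s : Multiset ι} {a c : ℕ}
    (hle : ∀ j ∈ s, f j ≤ c) (hsum : a * c < (s.map f).sum) : a < card s := by
  refine lt_of_mul_lt_mul_right (hsum.trans_le ?_) (Nat.zero_le c)
  simpa using sum_le_card_nsmul (s.map f) c (by simpa using hle)

theorem exists_replace_by_replicate (f : ι → ℕ) {s t : Multiset ι} (hts : t ≤ s) (i : ι)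
    {q : ℕ} (hq : (t.map f).sum = f i * q) :
    ∃ s' : Multiset ι, (s'.map f).sum = (s.map f).sum ∧ card s' + card t = card s + q := by
  obtain ⟨u, rfl⟩ := le_iff_exists_add.mp hts
  refine ⟨u + replicate q i, by simp [hq, mul_comm, add_comm], ?_⟩
  simp only [card_add, card_replicate]
  omega

variable (f : ι → ℕ) {i : ι} {s : Multiset ι}

theorem exists_card_lt_of_forall_lt (hi : 0 < f i) (hlt : ∀ j ∈ s, f j < f i)
    (hcard : f i ≤ card s) :
    ∃ s' : Multiset ι, (s'.map f).sum = (s.map f).sum ∧ card s' < card s := by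
  obtain ⟨t, hts, ht0, q, hq⟩ := exists_le_dvd_sum_map_of_le_card f hi s hcard
  have hsum : (t.map f).sum ≤ card t * (f i - 1) := by
    simpa using sum_le_card_nsmul (t.map f) (f i - 1)
      (by simpa using fun j hj => Nat.le_sub_one_of_lt (hlt j (mem_of_le hts hj)))
  have hqt : q < card t := by
    refine Nat.lt_of_mul_lt_mul_left (a := f i) ?_
    calc f i * q = (t.map f).sum := hq.symm
      _ ≤ card t * (f i - 1) := hsum
      _ < card t * f i := Nat.mul_lt_mul_of_pos_left (Nat.sub_lt hi one_pos) ht0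
      _ = f i * card t := mul_comm _ _
  obtain ⟨s', hsum', hcard'⟩ := exists_replace_by_replicate f hts i hq
  exact ⟨s', hsum', by omega⟩

theorem exists_lt_card_of_forall_gt (hi : 0 < f i) (hgt : ∀ j ∈ s, f i < f j)
    (hcard : f i ≤ card s) :
    ∃ s' : Multiset ι, (s'.map f).sum = (s.map f).sum ∧ card s < card s' := by
  obtain ⟨t, hts, ht0, q, hq⟩ := exists_le_dvd_sum_map_of_le_card f hi s hcard
  have hsum : card t * (f i + 1) ≤ (t.map f).sum := by
    simpa using card_nsmul_le_sum (s := t.map f) (a := f i + 1)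
      (by simpa [Nat.succ_le_iff] using fun j hj => hgt j (mem_of_le hts hj))
  have hqt : card t < q := by
    refine Nat.lt_of_mul_lt_mul_left (a := f i) ?_
    calc f i * card t = card t * f i := mul_comm _ _
      _ < card t * (f i + 1) := Nat.mul_lt_mul_of_pos_left (Nat.lt_succ_self (f i)) ht0
      _ ≤ (t.map f).sum := hsum
      _ = f i * q := hq
  obtain ⟨s', hsum', hcard'⟩ := exists_replace_by_replicate f hts i hq
  exact ⟨s', hsum', by omega⟩

end Multiset

section lenSet

variable {k : ℕ} {gens : Fin k → ℕ} {n l : ℕ}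

theorem mem_lenSet_iff :
    l ∈ lenSet k gens n ↔ ∃ s : Multiset (Fin k), (s.map gens).sum = n ∧ card s = l := by
  classical
  have hsum (s : Multiset (Fin k)) : (s.map gens).sum = ∑ i, s.count i * gens i := by
    rw [Finset.sum_multiset_map_count]
    exact Finset.sum_subset (Finset.subset_univ _) (by simp_all)
  constructor
  · rintro ⟨x, rfl, rfl⟩
    refine ⟨∑ i, replicate (x i) i, ?_, by simp⟩
    simp [hsum, count_sum', count_replicate]
  · rintro ⟨s, rfl, rfl⟩
    exact ⟨fun i => s.count i, hsum s, by simp⟩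

theorem lenSet_nonempty (hn : n ∈ AddSubmonoid.closure (Set.range gens)) :
    (lenSet k gens n).Nonempty := by
  obtain ⟨x, hx⟩ := AddSubmonoid.mem_closure_range_iff_of_fintype.mp hn
  exact ⟨∑ i, x i, x, by simpa using hx, rfl⟩

theorem bddAbove_lenSet (hpos : ∀ i, 0 < gens i) : BddAbove (lenSet k gens n) := by
  refine ⟨n, fun l hl => ?_⟩
  obtain ⟨s, rfl, rfl⟩ := mem_lenSet_iff.mp hl
  simpa using card_nsmul_le_sum (s := s.map gens) (a := 1)
    (by simpa using fun i (_ : i ∈ s) => Nat.one_le_of_lt (hpos i))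

theorem add_one_mem_lenSet_add (i : Fin k) (hl : l ∈ lenSet k gens n) :
    l + 1 ∈ lenSet k gens (n + gens i) := by
  obtain ⟨s, rfl, rfl⟩ := mem_lenSet_iff.mp hl
  exact mem_lenSet_iff.mpr ⟨i ::ₘ s, by simp [add_comm], by simp⟩

theorem mem_lenSet_of_mem {i : Fin k} {s : Multiset (Fin k)} (hi : i ∈ s)
    (hs : (s.map gens).sum = n + gens i) : card s - 1 ∈ lenSet k gens n := by
  obtain ⟨t, rfl⟩ := exists_cons_of_mem hi
  exact mem_lenSet_iff.mpr ⟨t, by simp at hs; omega, by simp⟩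

theorem sInf_lenSet_add (hn : (lenSet k gens n).Nonempty) (i : Fin k)
    (hshorter : ∀ s : Multiset (Fin k), (s.map gens).sum = n + gens i → i ∉ s →
      ∃ s' : Multiset (Fin k), (s'.map gens).sum = (s.map gens).sum ∧ card s' < card s) :
    sInf (lenSet k gens (n + gens i)) = sInf (lenSet k gens n) + 1 := by
  have hsucc := add_one_mem_lenSet_add i (Nat.sInf_mem hn)
  obtain ⟨s, hs, hcard⟩ := mem_lenSet_iff.mp (Nat.sInf_mem ⟨_, hsucc⟩)
  have hi : i ∈ s := by
    by_contra hi
    obtain ⟨s', hs', hlt⟩ := hshorter s hs hi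
    have := Nat.sInf_le (mem_lenSet_iff.mpr ⟨s', hs'.trans hs, rfl⟩)
    omega
  have hle := Nat.sInf_le hsucc
  have hge := Nat.sInf_le (mem_lenSet_of_mem hi hs)
  have := card_pos_iff_exists_mem.mpr ⟨i, hi⟩
  omega

theorem sSup_lenSet_add (hpos : ∀ i, 0 < gens i) (hn : (lenSet k gens n).Nonempty) (i : Fin k)
    (hlonger : ∀ s : Multiset (Fin k), (s.map gens).sum = n + gens i → i ∉ s →
      ∃ s' : Multiset (Fin k), (s'.map gens).sum = (s.map gens).sum ∧ card s < card s') :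
    sSup (lenSet k gens (n + gens i)) = sSup (lenSet k gens n) + 1 := by
  have hsucc := add_one_mem_lenSet_add i (Nat.sSup_mem hn (bddAbove_lenSet hpos))
  obtain ⟨s, hs, hcard⟩ :=
    mem_lenSet_iff.mp (Nat.sSup_mem ⟨_, hsucc⟩ (bddAbove_lenSet hpos))
  have hi : i ∈ s := by
    by_contra hi
    obtain ⟨s', hs', hlt⟩ := hlonger s hs hi
    have := le_csSup (bddAbove_lenSet hpos) (mem_lenSet_iff.mpr ⟨s', hs'.trans hs, rfl⟩)
    omega
  have hge := le_csSup (bddAbove_lenSet hpos) hsucc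
  have hle := le_csSup (bddAbove_lenSet hpos) (mem_lenSet_of_mem hi hs)
  have := card_pos_iff_exists_mem.mpr ⟨i, hi⟩
  omega

end lenSet

/-- For S = ⟨n₁ < ⋯ < n_k⟩ and n ∈ S with n > n_{k−1}n_k, we have
ℓ(n + n_k) = ℓ(n) + 1 and L(n + n₁) = L(n) + 1. -/
theorem stmt_14 (k : ℕ) (hk : 2 ≤ k) (gens : Fin k → ℕ)
    (hmono : StrictMono gens) (hpos : 0 < gens ⟨0, by omega⟩) :
    ∀ n : ℕ, n ∈ AddSubmonoid.closure (Set.range gens) →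
      gens ⟨k - 2, by omega⟩ * gens ⟨k - 1, by omega⟩ < n →
      sInf (lenSet k gens (n + gens ⟨k - 1, by omega⟩)) = sInf (lenSet k gens n) + 1 ∧
      sSup (lenSet k gens (n + gens ⟨0, by omega⟩)) = sSup (lenSet k gens n) + 1 := by
  intro n hn hbig
  have hle (i j : Fin k) (h : i.val ≤ j.val) : gens i ≤ gens j := hmono.monotone h
  have hgens_pos (i : Fin k) : 0 < gens i := hpos.trans_le (hle _ _ (Nat.zero_le _))
  have hne := lenSet_nonempty hn
  refine ⟨sInf_lenSet_add hne _ fun s hs hlast => ?_,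
    sSup_lenSet_add hgens_pos hne _ fun s hs hfirst => ?_⟩
  · have hs_le (j : Fin k) (hj : j ∈ s) : j.val ≤ k - 2 := by
      have hj_ne : j.val ≠ k - 1 := Fin.val_ne_of_ne (ne_of_mem_of_not_mem hj hlast)
      omega
    refine exists_card_lt_of_forall_lt gens (i := ⟨k - 1, by omega⟩) (hgens_pos _)
      (fun j hj => hmono (Fin.mk_lt_mk.mpr (by have := hs_le j hj; omega))) (le_of_lt ?_)
    refine lt_card_of_mul_lt_sum_map gens (fun j hj => hle j ⟨k - 2, by omega⟩ (hs_le j hj)) ?_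
    rw [hs, mul_comm]
    omega
  · have hs_pos (j : Fin k) (hj : j ∈ s) : 0 < j.val := by
      have hj_ne : j.val ≠ 0 := Fin.val_ne_of_ne (ne_of_mem_of_not_mem hj hfirst)
      omega
    refine exists_lt_card_of_forall_gt gens (i := ⟨0, by omega⟩) (hgens_pos _)
      (fun j hj => hmono (Fin.mk_lt_mk.mpr (hs_pos j hj))) (le_of_lt ?_)
    refine lt_card_of_mul_lt_sum_map gens
      (fun j _ => hle j ⟨k - 1, by omega⟩ (Nat.le_sub_one_of_lt j.isLt)) ?_
    have hfirst_le := Nat.mul_le_mul_right (gens ⟨k - 1, by omega⟩)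
      (hle ⟨0, by omega⟩ ⟨k - 2, by omega⟩ (Nat.zero_le _))
    rw [hs]
    omega
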